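/- Let $v\in\mathbb{Z}^n$ and define $v^\natural := (v_2,\ldots,v_n,v_1+1)$. With $\overline{v}_i = q^{v_i} t^{-k_i(v)}$ as above and $y^\natural := (y_2,\ldots,y_n,q y_1)$ for tuples $y$, one has $\overline{v}^{\,\natural} = \overline{v^\natural}$. -/
import Mathlib


open Finset

/-- `k_i(v) = #{k<i : v_k ≥ v_i} + #{k>i : v_k > v_i}`. -/
def kwt {n : ℕ} (v : Fin n → ℤ) (i : Fin n) : ℕ :=
  ((univ : Finset (Fin n)).filter (fun k => k < i ∧ v i ≤ v k)).card +
  ((univ : Finset (Fin n)).filter (fun k => i < k ∧ v i < v k)).card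

/-- `v̄_i = q^{v_i} t^{-k_i(v)}`. -/
noncomputable def vbar {F : Type} [Field F] (q t : F) {n : ℕ} (v : Fin n → ℤ)
    (i : Fin n) : F :=
  q ^ (v i) * t ^ (-(kwt v i : ℤ))

/-- `v^♮ = (v_2, …, v_n, v_1 + 1)` on integer vectors. -/
def natInt {n : ℕ} (v : Fin n → ℤ) : Fin n → ℤ :=
  fun j => if h : (j : ℕ) = n - 1 then v ⟨0, by have := j.isLt; omega⟩ + 1
    else v ⟨(j : ℕ) + 1, by have := j.isLt; omega⟩

lemma kwt_eq_card {n : ℕ} (v : Fin n → ℤ) (i : Fin n) :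
    kwt v i = ((univ : Finset (Fin n)).filter
      (fun k => (k < i ∧ v i ≤ v k) ∨ (i < k ∧ v i < v k))).card := by
  classical
  have hdisj : Disjoint
      ((univ : Finset (Fin n)).filter (fun k => k < i ∧ v i ≤ v k))
      ((univ : Finset (Fin n)).filter (fun k => i < k ∧ v i < v k)) := by
    rw [Finset.disjoint_left]
    intro a ha hb
    simp only [mem_filter] at ha hb
    exact absurd (ha.2.1.trans hb.2.1) (lt_irrefl a)
  rw [kwt, ← card_union_of_disjoint hdisj, ← filter_or]

lemma natInt_last {n : ℕ} (hn : 0 < n) (v : Fin n → ℤ) (j : Fin n)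
    (h : (j : ℕ) = n - 1) : natInt v j = v ⟨0, hn⟩ + 1 := by
  simp [natInt, h]

lemma natInt_not_last {n : ℕ} (v : Fin n → ℤ) (j : Fin n)
    (h : (j : ℕ) ≠ n - 1) :
    natInt v j = v ⟨(j : ℕ) + 1, by have := j.isLt; omega⟩ := by
  simp [natInt, h]

lemma kwtA {n : ℕ} (hn : 0 < n) (v : Fin n → ℤ) (j : Fin n)
    (hj : (j : ℕ) = n - 1) :
    kwt (natInt v) j = kwt v ⟨0, hn⟩ := by
  classical
  rw [kwt_eq_card, kwt_eq_card]
  refine Finset.card_bij'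
    (fun k hk => ⟨(k : ℕ) + 1, by
      have h2 := (mem_filter.mp hk).2
      rcases h2 with ⟨h1, _⟩ | ⟨h1, _⟩
      · have h1' : (k : ℕ) < (j : ℕ) := h1
        omega
      · have h1' : (j : ℕ) < (k : ℕ) := h1
        have := k.isLt
        omega⟩)
    (fun m hm => ⟨(m : ℕ) - 1, by have := m.isLt; omega⟩) ?_ ?_ ?_ ?_
  · intro k hk
    simp only [mem_filter, mem_univ, true_and] at hk ⊢
    rcases hk with ⟨h1, h2⟩ | ⟨h1, _⟩
    · have h1' : (k : ℕ) < (j : ℕ) := h1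
      have hk1 : (k : ℕ) < n - 1 := by omega
      rw [natInt_last hn v j hj, natInt_not_last v k (by omega)] at h2
      right
      refine ⟨?_, by omega⟩
      show (0 : ℕ) < (k : ℕ) + 1
      omega
    · have h1' : (j : ℕ) < (k : ℕ) := h1
      exact absurd h1' (by have := k.isLt; omega)
  · intro m hm
    simp only [mem_filter, mem_univ, true_and] at hm ⊢
    rcases hm with ⟨h1, _⟩ | ⟨h1, h2⟩
    · have h1' : (m : ℕ) < 0 := h1
      exact absurd h1' (by omega)
    · have hm0 : (0 : ℕ) < (m : ℕ) := h1
      have hmn := m.isLt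
      left
      refine ⟨?_, ?_⟩
      · show (m : ℕ) - 1 < (j : ℕ)
        omega
      · rw [natInt_last hn v j hj,
          natInt_not_last v ⟨(m : ℕ) - 1, by omega⟩ (by show (m : ℕ) - 1 ≠ n - 1; omega)]
        have hmm : (⟨(m : ℕ) - 1 + 1, by omega⟩ : Fin n) = m := by
          apply Fin.ext
          show (m : ℕ) - 1 + 1 = (m : ℕ)
          omega
        rw [hmm]
        omega
  · intro k hk
    apply Fin.ext
    show (k : ℕ) + 1 - 1 = (k : ℕ)
    omega
  · intro m hm
    have h1 : 0 < (m : ℕ) := by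
      simp only [mem_filter, mem_univ, true_and] at hm
      rcases hm with ⟨h1, _⟩ | ⟨h1, _⟩
      · exact absurd (show (m : ℕ) < 0 from h1) (by omega)
      · exact h1
    apply Fin.ext
    show (m : ℕ) - 1 + 1 = (m : ℕ)
    omega

lemma kwtB {n : ℕ} (v : Fin n → ℤ) (j : Fin n) (hj : (j : ℕ) ≠ n - 1) :
    kwt (natInt v) j = kwt v ⟨(j : ℕ) + 1, by have := j.isLt; omega⟩ := by
  classical
  have hn : 0 < n := j.pos
  have hjn : (j : ℕ) + 1 < n := by have := j.isLt; omega
  rw [kwt_eq_card, kwt_eq_card]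
  refine Finset.card_bij'
    (fun k _ => if h : (k : ℕ) = n - 1 then (⟨0, hn⟩ : Fin n)
      else ⟨(k : ℕ) + 1, by have := k.isLt; omega⟩)
    (fun m _ => if h : (m : ℕ) = 0 then (⟨n - 1, by omega⟩ : Fin n)
      else ⟨(m : ℕ) - 1, by have := m.isLt; omega⟩) ?_ ?_ ?_ ?_
  · intro k hk
    simp only [mem_filter, mem_univ, true_and] at hk ⊢
    rw [natInt_not_last v j hj] at hk
    by_cases hk' : (k : ℕ) = n - 1
    · rw [dif_pos hk']
      rw [natInt_last hn v k hk'] at hk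
      rcases hk with ⟨h1, h2⟩ | ⟨_, h2⟩
      · exact absurd (show (k : ℕ) < (j : ℕ) from h1) (by have := j.isLt; omega)
      · left
        exact ⟨show (0 : ℕ) < (j : ℕ) + 1 by omega, by omega⟩
    · rw [dif_neg hk']
      rw [natInt_not_last v k hk'] at hk
      rcases hk with ⟨h1, h2⟩ | ⟨h1, h2⟩
      · have h1' : (k : ℕ) < (j : ℕ) := h1
        left
        exact ⟨show (k : ℕ) + 1 < (j : ℕ) + 1 by omega, h2⟩
      · have h1' : (j : ℕ) < (k : ℕ) := h1
        right
        exact ⟨show (j : ℕ) + 1 < (k : ℕ) + 1 by omega, h2⟩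
  · intro m hm
    simp only [mem_filter, mem_univ, true_and] at hm ⊢
    rw [natInt_not_last v j hj]
    by_cases hm' : (m : ℕ) = 0
    · rw [dif_pos hm']
      rcases hm with ⟨h1, h2⟩ | ⟨h1, h2⟩
      · rw [natInt_last hn v ⟨n - 1, by omega⟩ rfl]
        have hm0 : m = ⟨0, hn⟩ := Fin.ext hm'
        rw [hm0] at h2
        right
        refine ⟨show (j : ℕ) < n - 1 by have := j.isLt; omega, by omega⟩
      · exact absurd (show (j : ℕ) + 1 < (m : ℕ) from h1) (by omega)
    · rw [dif_neg hm']
      have hmn := m.isLt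
      rw [natInt_not_last v ⟨(m : ℕ) - 1, by omega⟩ (show (m : ℕ) - 1 ≠ n - 1 by omega)]
      have hmm : (⟨(m : ℕ) - 1 + 1, by omega⟩ : Fin n) = m := by
        apply Fin.ext
        show (m : ℕ) - 1 + 1 = (m : ℕ)
        omega
      rw [hmm]
      rcases hm with ⟨h1, h2⟩ | ⟨h1, h2⟩
      · have h1' : (m : ℕ) < (j : ℕ) + 1 := h1
        left
        exact ⟨show (m : ℕ) - 1 < (j : ℕ) by omega, h2⟩
      · have h1' : (j : ℕ) + 1 < (m : ℕ) := h1
        right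
        exact ⟨show (j : ℕ) < (m : ℕ) - 1 by omega, h2⟩
  · intro k hk
    by_cases hk' : (k : ℕ) = n - 1
    · simp only [dif_pos hk']
      split_ifs with h
      · apply Fin.ext
        show n - 1 = (k : ℕ)
        omega
      · simp at h
    · simp only [dif_neg hk']
      split_ifs <;>
        first
          | (apply Fin.ext; show (k : ℕ) + 1 - 1 = (k : ℕ); omega)
          | (exfalso; simp_all)
  · intro m hm
    by_cases hm' : (m : ℕ) = 0
    · simp only [dif_pos hm']
      split_ifs with h
      · apply Fin.ext
        show (0 : ℕ) = (m : ℕ)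
        omega
      · simp at h
    · have hmn := m.isLt
      simp only [dif_neg hm']
      split_ifs with h
      · exact absurd (show (m : ℕ) - 1 = n - 1 from h) (by omega)
      · apply Fin.ext
        show (m : ℕ) - 1 + 1 = (m : ℕ)
        omega

/-- `(v̄)^♮ = overline{v^♮}`, where on field tuples `y^♮ = (y_2, …, y_n, q y_1)`. -/
theorem stmt2 {F : Type} [Field F] (q t : F) (hq : q ≠ 0) (ht : t ≠ 0)
    {n : ℕ} (hn : 0 < n) (v : Fin n → ℤ) :
    (fun j : Fin n => if h : (j : ℕ) = n - 1 then q * vbar q t v ⟨0, hn⟩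
        else vbar q t v ⟨(j : ℕ) + 1, by have := j.isLt; omega⟩)
      = vbar q t (natInt v) := by
  funext j
  by_cases h : (j : ℕ) = n - 1
  · rw [dif_pos h]
    rw [vbar, vbar, natInt_last hn v j h, kwtA hn v j h]
    rw [zpow_add_one₀ hq]
    ring
  · rw [dif_neg h]
    rw [vbar, vbar, natInt_not_last v j h, kwtB v j h]
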